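/- Let (λ₁, μ₁, η₁) and (λ₂, μ₂, η₂) be two distinct triples of complex numbers, let x_i ∈ ℂ^{n_i} satisfy A_i x_i = λ₁ B_i x_i + μ₁ C_i x_i + η₁ D_i x_i for i = 1, 2, 3 (right eigenvector of the first eigenvalue), and let y_i ∈ ℂ^{n_i} satisfy y_i^H A_i = λ₂ y_i^H B_i + μ₂ y_i^H C_i + η₂ y_i^H D_i for i = 1, 2, 3 (left eigenvector of the second eigenvalue), where ^H denotes conjugate transpose. Then (y₁ ⊗ y₂ ⊗ y₃)^H Δ₀ (x₁ ⊗ x₂ ⊗ x₃) = 0. -/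
import Mathlib

open Matrix Kronecker

/-- Kronecker product of vectors. -/
def vecKron {m n : Type*} (x : m → ℂ) (y : n → ℂ) : m × n → ℂ :=
  fun p => x p.1 * y p.2

lemma kron_mulVec {m n : Type*} [Fintype m] [Fintype n]
    (M : Matrix m m ℂ) (N : Matrix n n ℂ) (x : m → ℂ) (z : n → ℂ) :
    (M ⊗ₖ N) *ᵥ vecKron x z = vecKron (M *ᵥ x) (N *ᵥ z) := by
  ext ⟨i, j⟩
  simp only [mulVec, dotProduct, vecKron, kroneckerMap_apply]
  rw [Fintype.sum_prod_type, Finset.sum_mul_sum]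
  exact Finset.sum_congr rfl fun k _ => Finset.sum_congr rfl fun l _ => by ring

lemma vecKron_dot {m n : Type*} [Fintype m] [Fintype n]
    (u x : m → ℂ) (v z : n → ℂ) :
    vecKron u v ⬝ᵥ vecKron x z = (u ⬝ᵥ x) * (v ⬝ᵥ z) := by
  simp only [dotProduct, vecKron]
  rw [Fintype.sum_prod_type, Finset.sum_mul_sum]
  exact Finset.sum_congr rfl fun k _ => Finset.sum_congr rfl fun l _ => by ring

lemma star_vecKron {m n : Type*} (x : m → ℂ) (y : n → ℂ) :
    star (vecKron x y) = vecKron (star x) (star y) := by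
  ext ⟨i, j⟩; simp [vecKron]

/-- Factorized triple Kronecker bilinear form. -/
lemma triple_kron_form {n₁ n₂ n₃ : ℕ}
    (M₁ : Matrix (Fin n₁) (Fin n₁) ℂ) (M₂ : Matrix (Fin n₂) (Fin n₂) ℂ)
    (M₃ : Matrix (Fin n₃) (Fin n₃) ℂ)
    (x₁ y₁ : Fin n₁ → ℂ) (x₂ y₂ : Fin n₂ → ℂ) (x₃ y₃ : Fin n₃ → ℂ) :
    star (vecKron y₁ (vecKron y₂ y₃)) ⬝ᵥ ((M₁ ⊗ₖ (M₂ ⊗ₖ M₃)) *ᵥ vecKron x₁ (vecKron x₂ x₃))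
      = (star y₁ ⬝ᵥ (M₁ *ᵥ x₁)) * ((star y₂ ⬝ᵥ (M₂ *ᵥ x₂)) * (star y₃ ⬝ᵥ (M₃ *ᵥ x₃))) := by
  rw [kron_mulVec, kron_mulVec, star_vecKron, star_vecKron, vecKron_dot, vecKron_dot]

/-- Δ₀-orthogonality of the right eigenvector of one eigenvalue and the left
eigenvector of a different eigenvalue (part (ii) of the lemma underlying the
selection criterion of the Jacobi–Davidson method). -/
theorem threepar_delta0_orthogonality {n₁ n₂ n₃ : ℕ}
    (A₁ B₁ C₁ D₁ : Matrix (Fin n₁) (Fin n₁) ℂ)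
    (A₂ B₂ C₂ D₂ : Matrix (Fin n₂) (Fin n₂) ℂ)
    (A₃ B₃ C₃ D₃ : Matrix (Fin n₃) (Fin n₃) ℂ)
    (x₁ y₁ : Fin n₁ → ℂ) (x₂ y₂ : Fin n₂ → ℂ) (x₃ y₃ : Fin n₃ → ℂ)
    (lam₁ mu₁ eta₁ lam₂ mu₂ eta₂ : ℂ)
    (hne : (lam₁, mu₁, eta₁) ≠ (lam₂, mu₂, eta₂))
    (hx₁ : A₁ *ᵥ x₁ = lam₁ • (B₁ *ᵥ x₁) + mu₁ • (C₁ *ᵥ x₁) + eta₁ • (D₁ *ᵥ x₁))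
    (hx₂ : A₂ *ᵥ x₂ = lam₁ • (B₂ *ᵥ x₂) + mu₁ • (C₂ *ᵥ x₂) + eta₁ • (D₂ *ᵥ x₂))
    (hx₃ : A₃ *ᵥ x₃ = lam₁ • (B₃ *ᵥ x₃) + mu₁ • (C₃ *ᵥ x₃) + eta₁ • (D₃ *ᵥ x₃))
    (hy₁ : star y₁ ᵥ* A₁ = lam₂ • (star y₁ ᵥ* B₁) + mu₂ • (star y₁ ᵥ* C₁) + eta₂ • (star y₁ ᵥ* D₁))
    (hy₂ : star y₂ ᵥ* A₂ = lam₂ • (star y₂ ᵥ* B₂) + mu₂ • (star y₂ ᵥ* C₂) + eta₂ • (star y₂ ᵥ* D₂))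
    (hy₃ : star y₃ ᵥ* A₃ = lam₂ • (star y₃ ᵥ* B₃) + mu₂ • (star y₃ ᵥ* C₃) + eta₂ • (star y₃ ᵥ* D₃)) :
    letI Δ₀ := B₁ ⊗ₖ (C₂ ⊗ₖ D₃) - B₁ ⊗ₖ (D₂ ⊗ₖ C₃) - C₁ ⊗ₖ (B₂ ⊗ₖ D₃)
      + C₁ ⊗ₖ (D₂ ⊗ₖ B₃) + D₁ ⊗ₖ (B₂ ⊗ₖ C₃) - D₁ ⊗ₖ (C₂ ⊗ₖ B₃)
    star (vecKron y₁ (vecKron y₂ y₃)) ⬝ᵥ (Δ₀ *ᵥ vecKron x₁ (vecKron x₂ x₃)) = 0 := by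
  set b₁ := star y₁ ⬝ᵥ (B₁ *ᵥ x₁) with hb₁
  set c₁ := star y₁ ⬝ᵥ (C₁ *ᵥ x₁) with hc₁
  set d₁ := star y₁ ⬝ᵥ (D₁ *ᵥ x₁) with hd₁
  set b₂ := star y₂ ⬝ᵥ (B₂ *ᵥ x₂) with hb₂
  set c₂ := star y₂ ⬝ᵥ (C₂ *ᵥ x₂) with hc₂
  set d₂ := star y₂ ⬝ᵥ (D₂ *ᵥ x₂) with hd₂
  set b₃ := star y₃ ⬝ᵥ (B₃ *ᵥ x₃) with hb₃
  set c₃ := star y₃ ⬝ᵥ (C₃ *ᵥ x₃) with hc₃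
  set d₃ := star y₃ ⬝ᵥ (D₃ *ᵥ x₃) with hd₃
  have key : ∀ {n : ℕ} (A B C D : Matrix (Fin n) (Fin n) ℂ) (x y : Fin n → ℂ),
      A *ᵥ x = lam₁ • (B *ᵥ x) + mu₁ • (C *ᵥ x) + eta₁ • (D *ᵥ x) →
      star y ᵥ* A = lam₂ • (star y ᵥ* B) + mu₂ • (star y ᵥ* C) + eta₂ • (star y ᵥ* D) →
      (lam₁ - lam₂) * (star y ⬝ᵥ (B *ᵥ x)) + (mu₁ - mu₂) * (star y ⬝ᵥ (C *ᵥ x))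
        + (eta₁ - eta₂) * (star y ⬝ᵥ (D *ᵥ x)) = 0 := by
    intro n A B C D x y hx hy
    have h1 : star y ⬝ᵥ (A *ᵥ x)
        = lam₁ * (star y ⬝ᵥ (B *ᵥ x)) + mu₁ * (star y ⬝ᵥ (C *ᵥ x))
          + eta₁ * (star y ⬝ᵥ (D *ᵥ x)) := by
      rw [hx]; simp [dotProduct_add, dotProduct_smul, smul_eq_mul]
    have h2 : star y ⬝ᵥ (A *ᵥ x)
        = lam₂ * (star y ⬝ᵥ (B *ᵥ x)) + mu₂ * (star y ⬝ᵥ (C *ᵥ x))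
          + eta₂ * (star y ⬝ᵥ (D *ᵥ x)) := by
      rw [dotProduct_mulVec, hy]
      simp [add_dotProduct, smul_dotProduct, smul_eq_mul, dotProduct_mulVec]
    linear_combination h2 - h1
  have h₁ := key A₁ B₁ C₁ D₁ x₁ y₁ hx₁ hy₁
  have h₂ := key A₂ B₂ C₂ D₂ x₂ y₂ hx₂ hy₂
  have h₃ := key A₃ B₃ C₃ D₃ x₃ y₃ hx₃ hy₃
  rw [← hb₁, ← hc₁, ← hd₁] at h₁
  rw [← hb₂, ← hc₂, ← hd₂] at h₂
  rw [← hb₃, ← hc₃, ← hd₃] at h₃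
  have expand : star (vecKron y₁ (vecKron y₂ y₃)) ⬝ᵥ
      ((B₁ ⊗ₖ (C₂ ⊗ₖ D₃) - B₁ ⊗ₖ (D₂ ⊗ₖ C₃) - C₁ ⊗ₖ (B₂ ⊗ₖ D₃)
        + C₁ ⊗ₖ (D₂ ⊗ₖ B₃) + D₁ ⊗ₖ (B₂ ⊗ₖ C₃) - D₁ ⊗ₖ (C₂ ⊗ₖ B₃)) *ᵥ
        vecKron x₁ (vecKron x₂ x₃))
      = b₁ * (c₂ * d₃) - b₁ * (d₂ * c₃) - c₁ * (b₂ * d₃)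
        + c₁ * (d₂ * b₃) + d₁ * (b₂ * c₃) - d₁ * (c₂ * b₃) := by
    simp only [sub_mulVec, add_mulVec, dotProduct_sub, dotProduct_add, triple_kron_form,
      hb₁, hc₁, hd₁, hb₂, hc₂, hd₂, hb₃, hc₃, hd₃]
  show star (vecKron y₁ (vecKron y₂ y₃)) ⬝ᵥ _ = 0
  rw [expand]
  set α := lam₁ - lam₂ with hα
  set β := mu₁ - mu₂ with hβ
  set γ := eta₁ - eta₂ with hγ
  have hne' : α ≠ 0 ∨ β ≠ 0 ∨ γ ≠ 0 := by
    by_contra h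
    push_neg at h
    obtain ⟨h1, h2, h3⟩ := h
    apply hne
    have : lam₁ = lam₂ := by linear_combination h1
    have : mu₁ = mu₂ := by linear_combination h2
    have : eta₁ = eta₂ := by linear_combination h3
    simp_all
  rcases hne' with h | h | h
  · apply mul_left_cancel₀ h
    rw [mul_zero]
    linear_combination (c₂ * d₃ - d₂ * c₃) * h₁ - (c₁ * d₃ - d₁ * c₃) * h₂
      + (c₁ * d₂ - d₁ * c₂) * h₃
  · apply mul_left_cancel₀ h
    rw [mul_zero]
    linear_combination (d₂ * b₃ - b₂ * d₃) * h₁ - (d₁ * b₃ - b₁ * d₃) * h₂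
      + (d₁ * b₂ - b₁ * d₂) * h₃
  · apply mul_left_cancel₀ h
    rw [mul_zero]
    linear_combination (b₂ * c₃ - c₂ * b₃) * h₁ - (b₁ * c₃ - c₁ * b₃) * h₂
      + (b₁ * c₂ - c₁ * b₂) * h₃
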